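/- Let w_1,...,w_n be weights such that ∑_s p(x_s) w_s = ∫_a^b ω(x) p(x) dx for every polynomial p of degree < 2n+1, where x_s are the roots of the n-th orthogonal polynomial. Then each weight w_s is strictly positive. -/
import Mathlib


open intervalIntegral

/-- Positivity of Gaussian quadrature weights: if the weights `w s` make the
quadrature rule at the (distinct, interior) nodes `x s` exact for all
polynomials of degree less than `2n+1` against a positive continuous weight
function `ω` on `[a,b]`, then each `w s` is strictly positive. -/
theorem gaussian_weights_pos (n : ℕ) (hn : 0 < n) (a b : ℝ) (hab : a < b)
    (ω : ℝ → ℝ) (hω_cont : ContinuousOn ω (Set.Icc a b))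
    (hω_pos : ∀ t ∈ Set.Icc a b, 0 < ω t)
    (x : Fin n → ℝ) (hx_mem : ∀ s, x s ∈ Set.Ioo a b)
    (hx_inj : Function.Injective x)
    (w : Fin n → ℝ)
    (hexact : ∀ p : Polynomial ℝ, p.natDegree < 2 * n + 1 →
      ∑ s, w s * p.eval (x s) = ∫ t in a..b, ω t * p.eval t) :
    ∀ s, 0 < w s := by
  intro s
  set L : Polynomial ℝ := Lagrange.basis Finset.univ x s with hL
  have hinj : Set.InjOn x (Finset.univ : Finset (Fin n)) := hx_inj.injOn
  have hLs : L.eval (x s) = 1 := Lagrange.eval_basis_self hinj (Finset.mem_univ s)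
  have hLt : ∀ t : Fin n, t ≠ s → L.eval (x t) = 0 := fun t ht =>
    Lagrange.eval_basis_of_ne (Ne.symm ht) (Finset.mem_univ t)
  have hLne : L ≠ 0 := by
    intro h
    rw [h] at hLs
    simp at hLs
  -- degree bound for L^2
  have hdeg : (L ^ 2).natDegree < 2 * n + 1 := by
    have h1 : L.natDegree = n - 1 := by
      simpa using Lagrange.natDegree_basis hinj (Finset.mem_univ s)
    rw [Polynomial.natDegree_pow, h1]
    omega
  have key := hexact (L ^ 2) hdeg
  -- LHS equals w s
  have hlhs : ∑ t, w t * (L ^ 2).eval (x t) = w s := by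
    rw [Finset.sum_eq_single s]
    · simp [hLs]
    · intro t _ ht
      simp [hLt t ht]
    · simp
  rw [hlhs] at key
  rw [key]
  -- the integrand
  set f : ℝ → ℝ := fun t => ω t * (L ^ 2).eval t with hf
  have hf_cont : ContinuousOn f (Set.Icc a b) :=
    hω_cont.mul (Polynomial.continuous _).continuousOn
  have hf_int : IntervalIntegrable f MeasureTheory.volume a b := by
    apply ContinuousOn.intervalIntegrable
    rwa [Set.uIcc_of_le hab.le]
  have hf_nonneg : 0 ≤ᵐ[MeasureTheory.volume.restrict (Set.uIoc a b)] f := by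
    rw [Set.uIoc_of_le hab.le, Filter.EventuallyLE, MeasureTheory.ae_restrict_iff' measurableSet_Ioc]
    filter_upwards with t ht
    have : 0 < ω t := hω_pos t (Set.mem_Icc_of_Ioc ht)
    simp only [hf, Polynomial.eval_pow]
    positivity
  rw [integral_pos_iff_support_of_nonneg_ae' hf_nonneg hf_int]
  refine ⟨hab, ?_⟩
  have hroots : {t : ℝ | L.IsRoot t}.Finite := Polynomial.finite_setOf_isRoot hLne
  have hsub : Set.Ioo a b \ {t : ℝ | L.IsRoot t} ⊆ Function.support f ∩ Set.Ioc a b := by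
    rintro t ⟨ht, htr⟩
    refine ⟨?_, Set.Ioo_subset_Ioc_self ht⟩
    have hω : 0 < ω t := hω_pos t (Set.mem_Icc_of_Ioo ht)
    have hLt0 : L.eval t ≠ 0 := htr
    simp only [Function.mem_support, hf, Polynomial.eval_pow]
    positivity
  refine lt_of_lt_of_le ?_ (MeasureTheory.measure_mono hsub)
  rw [MeasureTheory.measure_diff_null (hroots.measure_zero _)]
  simp [hab]
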